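/- Call a finite word w over Σ₂ = {0,1} valid if no subword x of w with |x| = 5 has its reversal x^R also a subword of w. Every valid word of length 9 over Σ₂ is of the form y' y y'' where y' ∈ {ε, 0, 1, 00, 11}, y ∈ B, and y'' ∈ Σ₂*. -/
import Mathlib

def Valid (w : List (Fin 2)) : Prop :=
  ∀ x : List (Fin 2), x <:+: w → x.length = 5 → ¬ x.reverse <:+: w

def L1 : List (List (Fin 2)) := [[], [0], [1], [0, 0], [1, 1]]

def L2 : List (List (Fin 2)) :=
  [[0,0,1,0,1,1],[0,1,0,1,1,0],[1,0,1,1,0,0],[0,1,1,0,0,1],[1,1,0,0,1,0],[1,0,0,1,0,1],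
   [1,1,0,1,0,0],[1,0,1,0,0,1],[0,1,0,0,1,1],[1,0,0,1,1,0],[0,0,1,1,0,1],[0,1,1,0,1,0]]

theorem aux : ∀ f : Fin 9 → Fin 2,
    (∀ x ∈ (List.ofFn f).tails, ∀ y ∈ x.inits, y.length = 5 → ¬ y.reverse <:+: List.ofFn f) →
    ∃ y' ∈ L1, ∃ p ∈ L2, y' ++ p <+: List.ofFn f := by
  set_option maxRecDepth 40000 in decide

theorem rot : ∀ p ∈ L2, p ~r ([0, 0, 1, 0, 1, 1] : List (Fin 2)) ∨ p ~r ([1, 1, 0, 1, 0, 0] : List (Fin 2)) := by decide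

theorem stmt_12 (w : List (Fin 2)) (hlen : w.length = 9) (hval : Valid w) :
    ∃ y' y y'' : List (Fin 2),
      y' ∈ ([[], [0], [1], [0, 0], [1, 1]] : List (List (Fin 2))) ∧
      (y ~r ([0, 0, 1, 0, 1, 1] : List (Fin 2)) ∨ y ~r ([1, 1, 0, 1, 0, 0] : List (Fin 2))) ∧
      w = y' ++ y ++ y'' := by
  have hw : w = List.ofFn (fun i : Fin 9 => w[(i : ℕ)]'(by omega)) := by
    apply List.ext_getElem
    · simp [hlen]
    · intro i h1 h2
      simp only [List.getElem_ofFn]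
  obtain ⟨y', hy', p, hp, t, ht⟩ := aux _ (by
    rw [← hw]
    intro x hx y hy h5 hinf
    exact hval y (List.infix_iff_prefix_suffix.mpr ⟨x, (List.mem_inits _ _).mp hy, (List.mem_tails _ _).mp hx⟩) h5 hinf)
  refine ⟨y', p, t, hy', rot p hp, ?_⟩
  rw [hw, ← ht, List.append_assoc]
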